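/- Conjugation by * inverts every element of A_Λ: for all a ∈ A_Λ, one has * ∘ a ∘ * = a⁻¹ in Aut(W,S). -/

import Mathlib

set_option synthInstance.maxHeartbeats 1000000
set_option maxHeartbeats 2000000

open scoped Classical

noncomputable section

namespace LY

/-! ## The coefficient field `ℚ(q)` -/

/-- The field `ℚ(q)` of rational functions. -/
abbrev K : Type := RatFunc ℚ

/-- The indeterminate `q`. -/
def qK : K := RatFunc.X

/-- The inclusion `ℤ[q] → ℚ(q)`. -/
def toK (p : Polynomial ℤ) : K := algebraMap (Polynomial ℚ) K (p.map (Int.castRingHom ℚ))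

/-- Evaluation of `p ∈ ℤ[q]` at `−q`, as an element of `ℚ(q)`; i.e. `p(−q)`. -/
def atNegQ (p : Polynomial ℤ) : K := Polynomial.eval₂ (Int.castRingHom K) (-qK) p

/-- The standard basis element `T_w` (resp. `a_w`) of the function model `W → ℚ(q)`
of the Hecke algebra (resp. of the Lusztig–Vogan module `M`). -/
def TT {W : Type} (w : W) : W → K := fun y => if y = w then 1 else 0

variable {B W : Type} [Group W] {M : CoxeterMatrix B}

/-- The Bruhat order on a Coxeter group: `u ≤ v` iff `v` is obtained from `u` by successive
right multiplications by reflections, each increasing the length. -/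
def BruhatLE (cs : CoxeterSystem M W) (u v : W) : Prop :=
  Relation.ReflTransGen
    (fun a b => cs.length a < cs.length b ∧ ∃ t, cs.IsReflection t ∧ b = a * t) u v

/-- Connectedness of the Coxeter diagram of `M`. -/
def DiagramConnected (M : CoxeterMatrix B) : Prop :=
  ∀ i j : B, Relation.ReflTransGen (fun a b => a ≠ b ∧ M a b ≠ 2) i j

/-- An automorphism of `W` preserving the set `S` of simple reflections, i.e. an element
of `A = Aut(W,S)`. -/
def IsDiagAut (cs : CoxeterSystem M W) (a : MulAut W) : Prop :=
  (⇑a) '' (Set.range cs.simple) = Set.range cs.simple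

/-! ## The affine setting -/

/-- All the data and axioms describing the setting: `(W,S)` is the Coxeter group of an
untwisted connected affine Dynkin diagram (an irreducible affine Weyl group); `Λ` is the
subgroup of translations (elements with finite conjugacy class), free abelian of finite
rank and of finite index; `s₀` is a hyperspecial vertex, `J = S − {s₀}`, `W_J` is the
finite subgroup generated by `J` with longest element `w_J`; `*` is the involution of `W`
given by `w* = w_J w w_J` on `W_J` and `λ* = −(ʷᴶλ)` on `Λ`; `pr` is the projection
`W → W_J` along `Λ`; `ρ` is the conjugation action of `W` on `Λ_ℚ ≅ ℚ^rank`
(via the identification `freeIso` of `Λ` with `ℤ^rank`). -/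
structure AffineData (cs : CoxeterSystem M W) where
  finB : Finite B
  conn : DiagramConnected M
  infW : Infinite W
  /-- the subgroup `Λ` of translations -/
  Lam : Subgroup W
  hLam_mem : ∀ w : W, w ∈ Lam ↔ {x : W | IsConj w x}.Finite
  hLam_normal : Lam.Normal
  hLam_comm : ∀ a ∈ Lam, ∀ b ∈ Lam, a * b = b * a
  hLam_index : Lam.FiniteIndex
  /-- `Λ` is free abelian of finite rank -/
  rank : ℕ
  freeIso : Lam ≃* Multiplicative (Fin rank → ℤ)
  /-- the hyperspecial vertex `s₀` -/
  s0 : W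
  hs0_S : s0 ∈ Set.range cs.simple
  /-- `s₀` is hyperspecial: the projection `W → W/Λ` restricts to an isomorphism from the
  subgroup generated by `S − {s₀}` onto `W/Λ`. -/
  hs0_hyper : ∀ w : W, ∃! u : W,
    u ∈ Subgroup.closure (Set.range cs.simple \ {s0}) ∧ w * u⁻¹ ∈ Lam
  hWJ_fin : (Subgroup.closure (Set.range cs.simple \ {s0}) : Set W).Finite
  /-- the longest element `w_J` of `W_J` -/
  wJ : W
  hwJ_mem : wJ ∈ Subgroup.closure (Set.range cs.simple \ {s0})
  hwJ_max : ∀ u ∈ Subgroup.closure (Set.range cs.simple \ {s0}), cs.length u ≤ cs.length wJ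
  /-- the involution `*` of `W` -/
  st : MulAut W
  hst_inv : ∀ w : W, st (st w) = w
  hst_J : ∀ u ∈ Subgroup.closure (Set.range cs.simple \ {s0}), st u = wJ * u * wJ
  hst_Lam : ∀ l ∈ Lam, st l = (wJ * l * wJ⁻¹)⁻¹
  hst_S : ∀ s ∈ Set.range cs.simple, st s ∈ Set.range cs.simple
  /-- lower Bruhat intervals are finite -/
  hBruhat_fin : ∀ w : W, {y : W | BruhatLE cs y w}.Finite
  /-- the projection `W → W_J` along `Λ` (`w ↦ w̄`) -/
  pr : W → W
  hpr : ∀ w : W, pr w ∈ Subgroup.closure (Set.range cs.simple \ {s0}) ∧ w * (pr w)⁻¹ ∈ Lam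
  /-- the conjugation action of `W` on `Λ_ℚ ≅ ℚ^rank` -/
  rho : W → ((Fin rank → ℚ) →ₗ[ℚ] (Fin rank → ℚ))
  hrho : ∀ (w : W) (l : Lam),
    rho w (fun i => ((Multiplicative.toAdd (freeIso l)) i : ℚ)) =
      fun i => ((Multiplicative.toAdd
        (freeIso ⟨w * (l : W) * w⁻¹, hLam_normal.conj_mem _ l.2 w⟩)) i : ℚ)

namespace AffineData

variable {cs : CoxeterSystem M W} (D : AffineData cs)

/-- The set `J = S − {s₀}`. -/
def Jset : Set W := Set.range cs.simple \ {D.s0}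

/-- The finite Weyl group `W_J`. -/
def WJ : Subgroup W := Subgroup.closure D.Jset

/-- `λ ∈ Λ` is a dominant translation (`λ ∈ Λ⁺`). -/
def IsDominant (l : W) : Prop :=
  l ∈ D.Lam ∧ cs.length (l * D.wJ) = cs.length l + cs.length D.wJ

/-- The embedding `Λ → Λ_ℚ = ℚ^rank`. -/
def iota (l : D.Lam) : Fin D.rank → ℚ :=
  fun i => ((Multiplicative.toAdd (D.freeIso l)) i : ℚ)

/-- `e(A)`: the dimension of the `(−1)`-eigenspace of a linear endomorphism `A` of `Λ_ℚ`. -/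
def eNeg (f : (Fin D.rank → ℚ) →ₗ[ℚ] (Fin D.rank → ℚ)) : ℕ :=
  Module.finrank ℚ (Module.End.eigenspace (f : Module.End ℚ (Fin D.rank → ℚ)) (-1))

/-- The map `A_u : λ ↦ ᵘ(λ*) = −(ᵘʷᴶλ)` on `Λ_ℚ`, for `u ∈ W_J`. -/
def Amap (u : W) : (Fin D.rank → ℚ) →ₗ[ℚ] (Fin D.rank → ℚ) := - D.rho (u * D.wJ)

/-- The invariant `φ(w) = e(A_{w̄}) − e(A_e)` for `w ∈ I_*`. -/
def phi (w : W) : ℤ := (D.eNeg (D.Amap (D.pr w)) : ℤ) - (D.eNeg (D.Amap 1) : ℤ)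

/-- The double coset `W_J x W_J`. -/
def DCoset (x : W) : Set W := {y : W | ∃ u ∈ D.WJ, ∃ v ∈ D.WJ, y = u * x * v}

/-- The set `H = J ∩ bJb⁻¹`. -/
def Hset (b : W) : Set W := D.Jset ∩ ((fun s => b * s * b⁻¹) '' D.Jset)

/-- The set `H* ⊆ J`, image of `H` under `*`. -/
def Hstar (b : W) : Set W := (⇑D.st) '' D.Hset b

/-- The subgroup `W_{H*}` generated by `H*`. -/
def WHstar (b : W) : Subgroup W := Subgroup.closure (D.Hstar b)

/-- The reflection representation `R'` of `W_{H*}`, as a subspace of `Λ_ℚ`: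
the span of the vectors `λ − ˢλ` for `λ ∈ Λ`, `s ∈ H*`. -/
def Rprime (b : W) : Submodule ℚ (Fin D.rank → ℚ) :=
  Submodule.span ℚ
    {v : Fin D.rank → ℚ | ∃ l : D.Lam, ∃ s ∈ D.Hstar b,
      v = D.iota l - D.iota ⟨s * (l : W) * s⁻¹, D.hLam_normal.conj_mem _ l.2 s⟩}

/-- `e'(A)`: the dimension of the `(−1)`-eigenspace of an endomorphism `A` of `R'`. -/
def eNeg' {b : W} (f : ↥(D.Rprime b) →ₗ[ℚ] ↥(D.Rprime b)) : ℕ :=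
  Module.finrank ℚ (Module.End.eigenspace (f : Module.End ℚ ↥(D.Rprime b)) (-1))

/-- `φ'(z) = e'(B_z) − e'(B_e)`, where `B_u : x ↦ −u·(w_{H*}·x)` on `R'`; here
`rho'` is the conjugation action of `W_{H*}` on `R'` and `wHs` is the longest element
of `W_{H*}`. -/
def phiP {b : W} (rho' : W → (↥(D.Rprime b) →ₗ[ℚ] ↥(D.Rprime b))) (wHs z : W) : ℤ :=
  (D.eNeg' (-(rho' (z * wHs))) : ℤ) - (D.eNeg' (-(rho' wHs)) : ℤ)

/-- Membership in `A_Λ ⊆ A = Aut(W,S)`: automorphisms acting on `Λ` as conjugation by some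
element of `W_J`. -/
def InALam (a : MulAut W) : Prop :=
  IsDiagAut cs a ∧ ∃ w ∈ D.WJ, ∀ l ∈ D.Lam, a l = w * l * w⁻¹

/-- Membership in the coset `A_Λ* = {a ∘ * : a ∈ A_Λ}`. -/
def InALamStar (c : MulAut W) : Prop := ∃ a : MulAut W, D.InALam a ∧ c = a * D.st

/-- The double coset `W_J x W_J^◇`, where `W_J^◇` is the subgroup generated by
`J^◇ = S − {s₁}`. -/
def DCosetDia (s1 : W) (x : W) : Set W :=
  {y : W | ∃ u ∈ D.WJ, ∃ v ∈ Subgroup.closure (Set.range cs.simple \ {s1}), y = u * x * v}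


end AffineData

/-! ## The Hecke algebra, the Lusztig–Vogan module, and the polynomials `P`, `P^σ` -/

/-- The Hecke algebra of `(W,S)` over `ℚ(q)` (modelled on functions `W → ℚ(q)`, with basis
`TT w = T_w`), together with its bar involution, and the Kazhdan–Lusztig polynomials
`P_{y,w} ∈ ℤ[q]` characterized by their defining properties. -/
structure HeckeData (cs : CoxeterSystem M W) where
  /-- the involution `q ↦ q⁻¹` of `ℚ(q)` -/
  barK : K →+* K
  hbarK_X : barK qK = qK⁻¹
  hbarK_inv : ∀ x, barK (barK x) = x
  /-- the multiplication of the Hecke algebra -/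
  mulH : (W → K) →ₗ[K] (W → K) →ₗ[K] (W → K)
  hmul_assoc : ∀ x y z : W → K, mulH (mulH x y) z = mulH x (mulH y z)
  hmul_one : ∀ x : W → K, mulH (TT 1) x = x ∧ mulH x (TT 1) = x
  hmul_TT : ∀ u v : W, cs.length (u * v) = cs.length u + cs.length v →
    mulH (TT u) (TT v) = TT (u * v)
  hmul_Ts : ∀ s ∈ Set.range cs.simple,
    mulH (TT s) (TT s) = (qK - 1) • TT s + qK • TT (1 : W)
  /-- the bar involution of the Hecke algebra: the ring involution with `q ↦ q⁻¹`,
  `T_w ↦ (T_{w⁻¹})⁻¹` -/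
  barH : (W → K) →+ (W → K)
  hbarH_inv : ∀ x, barH (barH x) = x
  hbarH_smul : ∀ (c : K) (x : W → K), barH (c • x) = barK c • barH x
  hbarH_mul : ∀ x y : W → K, barH (mulH x y) = mulH (barH x) (barH y)
  hbarH_T : ∀ w : W, mulH (barH (TT w)) (TT w⁻¹) = TT (1 : W) ∧
    mulH (TT w⁻¹) (barH (TT w)) = TT (1 : W)
  /-- the Kazhdan–Lusztig polynomials `P_{y,w}` -/
  P : W → W → Polynomial ℤ
  hP_supp : ∀ y w : W, ¬ BruhatLE cs y w → P y w = 0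
  hP_diag : ∀ w : W, P w w = 1
  hP_deg : ∀ y w : W, BruhatLE cs y w → y ≠ w →
    2 * (P y w).natDegree + 1 ≤ cs.length w - cs.length y
  hP_dual : ∀ w : W,
    (qK ^ cs.length w) • barH (fun y => if BruhatLE cs y w then toK (P y w) else 0)
      = fun y => if BruhatLE cs y w then toK (P y w) else 0

/-- The Lusztig–Vogan module `M` over the Hecke algebra `H'` with parameter `q²`, attached to
a length-preserving involutive automorphism `star` of `(W,S)`, together with its bar
involution, and the polynomials `P^σ_{y,w} ∈ ℤ[q]` (for `y, w ∈ I_*`) characterized by their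
defining properties.  Both `H'` and `M` are modelled on functions `W → ℚ(q)`; the basis
element `a_w` of `M` (for `w ∈ I_*`) is `TT w`. -/
structure LVData (cs : CoxeterSystem M W) (star : MulAut W) where
  /-- the involution `q ↦ q⁻¹` of `ℚ(q)` -/
  barK : K →+* K
  hbarK_X : barK qK = qK⁻¹
  hbarK_inv : ∀ x, barK (barK x) = x
  /-- the multiplication of the Hecke algebra `H'` with parameter `q²` -/
  mulH' : (W → K) →ₗ[K] (W → K) →ₗ[K] (W → K)
  hmul'_assoc : ∀ x y z : W → K, mulH' (mulH' x y) z = mulH' x (mulH' y z)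
  hmul'_one : ∀ x : W → K, mulH' (TT 1) x = x ∧ mulH' x (TT 1) = x
  hmul'_TT : ∀ u v : W, cs.length (u * v) = cs.length u + cs.length v →
    mulH' (TT u) (TT v) = TT (u * v)
  hmul'_Ts : ∀ s ∈ Set.range cs.simple,
    mulH' (TT s) (TT s) = (qK ^ 2 - 1) • TT s + (qK ^ 2) • TT (1 : W)
  /-- the bar involution of `H'` -/
  barH' : (W → K) →+ (W → K)
  hbarH'_inv : ∀ x, barH' (barH' x) = x
  hbarH'_smul : ∀ (c : K) (x : W → K), barH' (c • x) = barK c • barH' x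
  hbarH'_mul : ∀ x y : W → K, barH' (mulH' x y) = mulH' (barH' x) (barH' y)
  hbarH'_T : ∀ w : W, mulH' (barH' (TT w)) (TT w⁻¹) = TT (1 : W) ∧
    mulH' (TT w⁻¹) (barH' (TT w)) = TT (1 : W)
  /-- the action of `H'` on the module `M` -/
  actM : (W → K) →ₗ[K] (W → K) →ₗ[K] (W → K)
  hact_one : ∀ m : W → K, actM (TT 1) m = m
  hact_mul : ∀ (h h' : W → K) (m : W → K), actM (mulH' h h') m = actM h (actM h' m)
  hact1 : ∀ s ∈ Set.range cs.simple, ∀ w : W, star w = w⁻¹ →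
    s * w = w * star s → cs.length w < cs.length (s * w) →
    actM (TT s) (TT w) = qK • TT w + (qK + 1) • TT (s * w)
  hact2 : ∀ s ∈ Set.range cs.simple, ∀ w : W, star w = w⁻¹ →
    s * w = w * star s → cs.length (s * w) < cs.length w →
    actM (TT s) (TT w) = (qK ^ 2 - qK - 1) • TT w + (qK ^ 2 - qK) • TT (s * w)
  hact3 : ∀ s ∈ Set.range cs.simple, ∀ w : W, star w = w⁻¹ →
    s * w ≠ w * star s → cs.length w < cs.length (s * w) →
    actM (TT s) (TT w) = TT (s * w * star s)
  hact4 : ∀ s ∈ Set.range cs.simple, ∀ w : W, star w = w⁻¹ →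
    s * w ≠ w * star s → cs.length (s * w) < cs.length w →
    actM (TT s) (TT w) = (qK ^ 2 - 1) • TT w + (qK ^ 2) • TT (s * w * star s)
  /-- the bar involution of the module `M` -/
  barM : (W → K) →+ (W → K)
  hbarM_inv : ∀ m : W → K, barM (barM m) = m
  hbarM_smul : ∀ (c : K) (m : W → K), barM (c • m) = barK c • barM m
  hbarM_act : ∀ (h m : W → K), barM (actM h m) = actM (barH' h) (barM m)
  hbarM_one : barM (TT 1) = TT (1 : W)
  /-- the Lusztig–Vogan polynomials `P^σ_{y,w}` -/
  Psig : W → W → Polynomial ℤ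
  hPsig_supp : ∀ y w : W, ¬ (BruhatLE cs y w ∧ star y = y⁻¹) → Psig y w = 0
  hPsig_diag : ∀ w : W, star w = w⁻¹ → Psig w w = 1
  hPsig_deg : ∀ y w : W, star w = w⁻¹ → star y = y⁻¹ → BruhatLE cs y w → y ≠ w →
    2 * (Psig y w).natDegree + 1 ≤ cs.length w - cs.length y
  hPsig_dual : ∀ w : W, star w = w⁻¹ →
    (qK ^ (2 * cs.length w)) •
        barM (fun y => if BruhatLE cs y w ∧ star y = y⁻¹ then toK (Psig y w) else 0)
      = fun y => if BruhatLE cs y w ∧ star y = y⁻¹ then toK (Psig y w) else 0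

/-! ## The `Z`-polynomials -/

/-- `Z_w(q) = Σ_{y ≤ w} P_{y,w}(q) q^{ℓ(y)}`. -/
def Zpoly (cs : CoxeterSystem M W) (HD : HeckeData cs) (w : W) : K :=
  ∑ᶠ y : W, if BruhatLE cs y w then toK (HD.P y w) * qK ^ cs.length y else 0

/-- `Z_w(−q) = Σ_{y ≤ w} P_{y,w}(−q) (−q)^{ℓ(y)}`. -/
def ZpolyNeg (cs : CoxeterSystem M W) (HD : HeckeData cs) (w : W) : K :=
  ∑ᶠ y : W, if BruhatLE cs y w then atNegQ (HD.P y w) * (-qK) ^ cs.length y else 0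

/-- `Z^σ_w(q) = Σ_{y ≤ w, y ∈ I_*} P^σ_{y,w}(q) q^{ℓ(y)} ((q−1)/(q+1))^{φ(y)}`. -/
def Zsig (cs : CoxeterSystem M W) (D : AffineData cs) (LD : LVData cs D.st) (w : W) : K :=
  ∑ᶠ y : W, if BruhatLE cs y w ∧ D.st y = y⁻¹ then
    toK (LD.Psig y w) * qK ^ cs.length y * ((qK - 1) / (qK + 1)) ^ D.phi y else 0

end LY

/-!
If `a` acts on `Λ` as conjugation by `w`, lift `*` and `a` to the holomorph `W ⋊ Aut W` as
`k = (w_J⁻¹, *)` and `h = (w⁻¹, a)`. They act on `Λ` by `-1` and `1`, so `m = k h k h` centralizes `Λ`. Summing translation parts over `W_J` gives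
a cocycle `τ` of the holomorph with values in `Λ_ℚ`, which vanishes at `k`, hence `τ(m) = 0`. An
element centralizing `Λ` with `τ = 0` commutes with `W`, so `* a * a` is an inner automorphism
`conj x`. It preserves `S`; but if `x ≠ 1`, the right inversion set of `x` is finite, stable under
conjugation, and contains a simple reflection, which would then have finitely many conjugates,
i.e. be a translation, impossible as `Λ` is torsion free.
-/

theorem Finset.sum_range_two_mul {A : Type*} [AddCommMonoid A] (f : ℕ → A) (n : ℕ) :
    ∑ k ∈ Finset.range (2 * n), f k =
      ∑ l ∈ Finset.range n, (f (2 * l) + f (2 * l + 1)) := by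
  induction n with
  | zero => simp
  | succ n ih => rw [Nat.mul_succ, Finset.sum_range_succ, Finset.sum_range_succ,
      Finset.sum_range_succ, ih, add_assoc]

theorem Equiv.Perm.pow_apply_of_apply_eq_conj {G A : Type*} [Group G] [AddCommMonoid A]
    {σ : Equiv.Perm (G × A)} {c : G} {χ : G → A}
    (hσ : ∀ p, σ p = (c * p.1 * c⁻¹, p.2 + χ p.1)) (k : ℕ) (p : G × A) :
    (σ ^ k) p = (c ^ k * p.1 * (c ^ k)⁻¹,
      p.2 + ∑ l ∈ Finset.range k, χ (c ^ l * p.1 * (c ^ l)⁻¹)) := by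
  induction k with
  | zero => simp
  | succ k ih =>
    rw [pow_succ', Equiv.Perm.mul_apply, ih, hσ, Finset.sum_range_succ, pow_succ']
    simp only [mul_inv_rev, mul_assoc, add_assoc]

namespace CoxeterSystem

variable {B W : Type} [Group W] {M : CoxeterMatrix B} (cs : CoxeterSystem M W)

local prefix:100 "s" => cs.simple
local prefix:100 "π" => cs.wordProd
local prefix:100 "ℓ" => cs.length

theorem simple_mul_mul_simple_eq_iff (i : B) (t v : W) :
    s i * t * s i = v ↔ t = s i * v * s i := by
  constructor <;> rintro rfl <;> simp [mul_assoc]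

def reflPerm (i : B) : Equiv.Perm (W × ZMod 2) :=
  Function.Involutive.toPerm (fun p => (s i * p.1 * s i, p.2 + if p.1 = s i then 1 else 0)) <| by
    rintro ⟨t, ε⟩
    simp only [simple_mul_mul_simple_eq_iff, Prod.mk.injEq, add_assoc]
    refine ⟨by simp, by split_ifs <;> simp_all [CharTwo.add_self_eq_zero]⟩

theorem reflPerm_apply (i : B) (p : W × ZMod 2) :
    cs.reflPerm i p = (s i * p.1 * s i, p.2 + if p.1 = s i then 1 else 0) := rfl

theorem simple_mul_simple_pow_mul_simple (i j : B) (k : ℕ) :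
    s j * (s i * s j) ^ k = (s j * s i) ^ k * s j := by
  induction k with
  | zero => simp
  | succ k ih =>
    rw [pow_succ', pow_succ', ← mul_assoc, ← mul_assoc, mul_assoc (s j * s i), ih]
    simp only [mul_assoc]

theorem isLiftable_reflPerm : M.IsLiftable cs.reflPerm := by
  intro i j
  ext ⟨w, ε⟩ : 1
  set d := s j * s i
  have hc : ∀ l : ℕ, ((s i * s j) ^ l)⁻¹ = d ^ l := by simp [d, ← inv_pow]
  set χ : W → ZMod 2 := fun v =>
    (if v = s j then 1 else 0) + if v = s j * s i * s j then 1 else 0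
  have hstep : ∀ p, (cs.reflPerm i * cs.reflPerm j) p =
      (s i * s j * p.1 * (s i * s j)⁻¹, p.2 + χ p.1) := by
    rintro ⟨t, ε⟩
    have := simple_mul_mul_simple_eq_iff cs j t (s i)
    simp only [Equiv.Perm.mul_apply, reflPerm_apply, this, χ]
    simp [mul_assoc, add_assoc]
  -- the flips of `(reflPerm i * reflPerm j) ^ m` happen at the points `d ^ n * s j`, `n < 2 m`
  have hflip : ∀ l : ℕ, χ ((s i * s j) ^ l * w * ((s i * s j) ^ l)⁻¹) =
      (if w = d ^ (2 * l) * s j then 1 else 0) +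
        if w = d ^ (2 * l + 1) * s j then (1 : ZMod 2) else 0 := by
    intro l
    have hconj : ∀ v, (s i * s j) ^ l * w * ((s i * s j) ^ l)⁻¹ = v ↔
        w = d ^ l * v * (s i * s j) ^ l := by
      intro v
      rw [← hc]
      constructor <;> rintro rfl <;> group
    have h0 : d ^ l * s j * (s i * s j) ^ l = d ^ (2 * l) * s j := by
      rw [mul_assoc, simple_mul_simple_pow_mul_simple, ← mul_assoc, ← pow_add, two_mul]
    have h1 : d ^ l * (s j * s i * s j) * (s i * s j) ^ l = d ^ (2 * l + 1) * s j := by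
      rw [mul_assoc, mul_assoc, simple_mul_simple_pow_mul_simple, ← mul_assoc, ← mul_assoc,
        ← pow_succ, ← pow_add]
      ring_nf
    simp only [χ, hconj, h0, h1]
  have hper : ∀ n, d ^ (M i j + n) * s j = d ^ n * s j := fun n => by
    rw [pow_add, cs.simple_mul_simple_pow', one_mul]
  rw [Equiv.Perm.pow_apply_of_apply_eq_conj (c := s i * s j) (χ := χ) hstep,
    cs.simple_mul_simple_pow, Finset.sum_congr rfl fun l _ => hflip l,
    ← Finset.sum_range_two_mul (fun n => if w = d ^ n * s j then 1 else 0),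
    two_mul, Finset.sum_range_add]
  simp [hper, CharTwo.add_self_eq_zero]

/-- Tits' representation, which makes the reflection cocycle below well defined. -/
def reflRep : W →* Equiv.Perm (W × ZMod 2) := cs.lift ⟨cs.reflPerm, cs.isLiftable_reflPerm⟩

/-- The parity of the number of occurrences of `t` in the right inversion sequence of any word
for `w`. -/
def reflCocycle (w t : W) : ZMod 2 := (cs.reflRep w (t, 0)).2

theorem reflRep_simple (i : B) : cs.reflRep (s i) = cs.reflPerm i := cs.lift_apply_simple _ i

theorem reflRep_apply (w t : W) (ε : ZMod 2) :
    cs.reflRep w (t, ε) = (w * t * w⁻¹, ε + cs.reflCocycle w t) := by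
  suffices ∀ t ε, cs.reflRep w (t, ε) = (w * t * w⁻¹, ε + (cs.reflRep w (t, 0)).2) from
    this t ε
  induction w using cs.simple_induction_left with
  | one => simp
  | mul_simple_left v i ih =>
    intro t ε
    rw [map_mul, Equiv.Perm.mul_apply, Equiv.Perm.mul_apply, ih t, ih t 0, reflRep_simple]
    simp [reflPerm_apply, mul_assoc, add_assoc]

theorem reflCocycle_one (t : W) : cs.reflCocycle 1 t = 0 := by
  simp [reflCocycle]

theorem reflCocycle_mul (u v t : W) :
    cs.reflCocycle (u * v) t = cs.reflCocycle v t + cs.reflCocycle u (v * t * v⁻¹) := by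
  have := congr_arg Prod.snd (cs.reflRep_apply (u * v) t 0)
  rw [map_mul, Equiv.Perm.mul_apply, reflRep_apply, reflRep_apply] at this
  simpa using this.symm

theorem reflCocycle_simple (i : B) (t : W) :
    cs.reflCocycle (s i) t = if t = s i then 1 else 0 := by
  simp [reflCocycle, reflRep_simple, reflPerm_apply]

theorem mem_rightInvSeq_of_reflCocycle_ne_zero {ω : List B} {t : W}
    (h : cs.reflCocycle (π ω) t ≠ 0) : t ∈ cs.rightInvSeq ω := by
  induction ω with
  | nil => simp [reflCocycle_one] at h
  | cons i ω ih =>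
    rw [wordProd_cons, reflCocycle_mul, reflCocycle_simple] at h
    rw [rightInvSeq, List.mem_cons]
    by_cases hi : π ω * t * (π ω)⁻¹ = s i
    · left
      rw [← hi]
      group
    · exact Or.inr (ih (by simpa [hi] using h))

theorem isRightInversion_of_reflCocycle_ne_zero {w t : W} (h : cs.reflCocycle w t ≠ 0) :
    cs.IsRightInversion w t := by
  obtain ⟨ω, hω, rfl⟩ := cs.exists_isReduced w
  exact cs.isRightInversion_of_mem_rightInvSeq hω (cs.mem_rightInvSeq_of_reflCocycle_ne_zero h)

theorem reflCocycle_self {t : W} (ht : cs.IsReflection t) : cs.reflCocycle t t = 1 := by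
  obtain ⟨u, i, rfl⟩ := ht
  have h1 := cs.reflCocycle_mul (u * s i) u⁻¹ (u * s i * u⁻¹)
  have h2 := cs.reflCocycle_mul u (s i) (s i)
  have h3 := cs.reflCocycle_mul u u⁻¹ (u * s i * u⁻¹)
  have hconj : u⁻¹ * (u * s i * u⁻¹) * u⁻¹⁻¹ = s i := by group
  rw [hconj] at h1 h3
  rw [mul_inv_cancel_right, reflCocycle_simple, if_pos rfl] at h2
  rw [mul_inv_cancel, reflCocycle_one] at h3
  linear_combination h1 + h2 - h3

theorem reflCocycle_ne_zero_iff {w t : W} (ht : cs.IsReflection t) :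
    cs.reflCocycle w t ≠ 0 ↔ cs.IsRightInversion w t := by
  refine ⟨cs.isRightInversion_of_reflCocycle_ne_zero, fun hwt => ?_⟩
  have h := cs.reflCocycle_mul (w * t) t t
  have hwtt : cs.reflCocycle (w * t) t = 0 := by
    by_contra hne
    have := (cs.isRightInversion_of_reflCocycle_ne_zero hne).2
    rw [mul_assoc, ht.mul_self, mul_one] at this
    exact absurd hwt.2 (by omega)
  rw [mul_assoc, ht.mul_self, mul_one, one_mul, ht.inv, reflCocycle_self cs ht, hwtt] at h
  simp [h]

end CoxeterSystem


/-- The holomorph `G ⋊ Aut G`, acting on `G` by the maps `y ↦ x * b y`. -/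
abbrev Holomorph (G : Type*) [Group G] : Type _ := G ⋊[MonoidHom.id (MulAut G)] MulAut G

namespace Holomorph

variable {G : Type*} [Group G]

instance : MulAction (Holomorph G) G where
  smul g y := g.left * g.right y
  one_smul y := by simp [HSMul.hSMul]
  mul_smul g g' y := by simp [HSMul.hSMul, mul_assoc]

theorem smul_def (g : Holomorph G) (y : G) : g • y = g.left * g.right y := rfl

theorem smul_mul (g : Holomorph G) (x y : G) :
    g • (x * y) = g.left * g.right x * g.left⁻¹ * g • y := by
  simp [smul_def, mul_assoc]

end Holomorph

namespace LY

variable {B W : Type} [Group W] {M : CoxeterMatrix B} {cs : CoxeterSystem M W}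

theorem IsDiagAut.inv {a : MulAut W} (ha : IsDiagAut cs a) : IsDiagAut cs a⁻¹ := by
  rw [IsDiagAut]
  conv_lhs => rw [← ha]
  simp [Set.image_image]

theorem IsDiagAut.mul {a b : MulAut W} (ha : IsDiagAut cs a) (hb : IsDiagAut cs b) :
    IsDiagAut cs (a * b) := by
  rw [IsDiagAut, MulAut.coe_mul, Set.image_comp, hb, ha]

theorem IsDiagAut.length_map_le {a : MulAut W} (ha : IsDiagAut cs a) (w : W) :
    cs.length (a w) ≤ cs.length w := by
  have hS : ∀ i, ∃ j, a (cs.simple i) = cs.simple j := fun i =>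
    (ha.subset ⟨_, ⟨i, rfl⟩, rfl⟩).imp fun _ => Eq.symm
  choose φ hφ using hS
  obtain ⟨ω, hω, rfl⟩ := cs.exists_isReduced w
  have : a (cs.wordProd ω) = cs.wordProd (ω.map φ) := by
    simp [CoxeterSystem.wordProd, map_list_prod, Function.comp_def, hφ]
  rw [this, hω]
  simpa using cs.length_wordProd_le (ω.map φ)

theorem IsDiagAut.length_map {a : MulAut W} (ha : IsDiagAut cs a) (w : W) :
    cs.length (a w) = cs.length w :=
  (ha.length_map_le w).antisymm (by simpa using ha.inv.length_map_le (a w))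

theorem IsDiagAut.reflCocycle_conj {g : W} (hg : IsDiagAut cs (MulAut.conj g)) {t : W}
    (ht : cs.IsReflection t) (u : W) :
    cs.reflCocycle g (u * t * u⁻¹) = cs.reflCocycle g t := by
  have hlen : ∀ y, cs.length (g * y * g⁻¹) = cs.length y := hg.length_map
  -- both values are `0` or `1` according to an inversion condition, which conjugation preserves
  have hu : cs.reflCocycle (g * u * g⁻¹) (g * t * g⁻¹) = cs.reflCocycle u t := by
    have key : ∀ a b : ZMod 2, (a ≠ 0 ↔ b ≠ 0) → a = b := by decide
    refine key _ _ ?_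
    rw [cs.reflCocycle_ne_zero_iff (ht.conj g), cs.reflCocycle_ne_zero_iff ht,
      CoxeterSystem.IsRightInversion, CoxeterSystem.IsRightInversion,
      show g * u * g⁻¹ * (g * t * g⁻¹) = g * (u * t) * g⁻¹ by group, hlen, hlen]
    exact and_congr_left fun _ => iff_of_true (ht.conj g) ht
  have h1 := cs.reflCocycle_mul g u t
  have h2 := cs.reflCocycle_mul (g * u * g⁻¹) g t
  rw [inv_mul_cancel_right, hu, h1] at h2
  linear_combination h2

theorem IsDiagAut.finite_isConj_simple {g : W} (hg : IsDiagAut cs (MulAut.conj g)) (hg1 : g ≠ 1) :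
    ∃ i, {x | IsConj (cs.simple i) x}.Finite := by
  obtain ⟨i, hi⟩ := cs.exists_rightDescent_of_ne_one hg1
  obtain ⟨ω, hω, rfl⟩ := cs.exists_isReduced g
  refine ⟨i, (cs.rightInvSeq ω).finite_toSet.subset fun x hx => ?_⟩
  obtain ⟨c, rfl⟩ := isConj_iff.mp hx
  apply cs.mem_rightInvSeq_of_reflCocycle_ne_zero
  rw [hg.reflCocycle_conj (cs.isReflection_simple i),
    cs.reflCocycle_ne_zero_iff (cs.isReflection_simple i)]
  exact ⟨cs.isReflection_simple i, hi⟩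

namespace AffineData

variable (D : AffineData cs)

theorem map_mem_Lam (b : MulAut W) {l : W} (hl : l ∈ D.Lam) : b l ∈ D.Lam := by
  rw [D.hLam_mem] at hl ⊢
  refine (hl.image b).subset fun x hx => ?_
  obtain ⟨c, rfl⟩ := isConj_iff.mp hx
  exact ⟨b.symm c * l * (b.symm c)⁻¹, isConj_iff.mpr ⟨_, rfl⟩, by simp⟩

/-- Since `Λ` has finite index, an element centralizing `Λ` has only finitely many conjugates. -/
theorem mem_Lam_of_commute {y : W} (h : ∀ l ∈ D.Lam, Commute y l) : y ∈ D.Lam := by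
  have := D.hLam_index
  rw [D.hLam_mem]
  let f : W ⧸ D.Lam → W := Quotient.lift (fun g => g * y * g⁻¹) fun a b hab => by
    have hy := (h _ (QuotientGroup.leftRel_apply.mp hab)).eq
    calc a * y * a⁻¹ = a * ((a⁻¹ * b) * y * (a⁻¹ * b)⁻¹) * a⁻¹ := by
          rw [← hy]
          group
      _ = b * y * b⁻¹ := by group
  refine (Set.finite_range f).subset fun x hx => ?_
  obtain ⟨c, rfl⟩ := isConj_iff.mp hx
  exact ⟨QuotientGroup.mk c, rfl⟩

theorem eq_one_of_mem_Lam_of_mul_self {l : W} (hl : l ∈ D.Lam) (h : l * l = 1) : l = 1 := by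
  have h2 : (2 : ℕ) • Multiplicative.toAdd (D.freeIso ⟨l, hl⟩) = 0 := by
    rw [two_nsmul, ← toAdd_mul, ← map_mul]
    simp [Subtype.ext_iff, h]
  have := toAdd_eq_zero.mp ((smul_eq_zero.mp h2).resolve_left two_ne_zero)
  simpa [Subtype.ext_iff] using D.freeIso.injective (this.trans (map_one _).symm)

theorem simple_not_mem_Lam (i : B) : cs.simple i ∉ D.Lam := fun hs => by
  simpa [D.eq_one_of_mem_Lam_of_mul_self hs (cs.simple_mul_simple_self i)] using cs.length_simple i

theorem isDiagAut_st : IsDiagAut cs D.st :=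
  Set.Subset.antisymm (Set.image_subset_iff.mpr D.hst_S) fun x hx =>
    ⟨D.st x, D.hst_S x hx, D.hst_inv x⟩

/-- Otherwise some simple reflection would have finitely many conjugates, i.e. be a translation. -/
theorem eq_one_of_isDiagAut_conj (D : AffineData cs) {g : W}
    (hg : IsDiagAut cs (MulAut.conj g)) : g = 1 := by
  by_contra hg1
  obtain ⟨i, hi⟩ := hg.finite_isConj_simple hg1
  exact D.simple_not_mem_Lam i ((D.hLam_mem _).mpr hi)

theorem pr_mem (w : W) : D.pr w ∈ D.WJ := (D.hpr w).1

theorem pr_eq_of_mem {w u : W} (hu : u ∈ D.WJ) (h : w * u⁻¹ ∈ D.Lam) : D.pr w = u :=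
  (D.hs0_hyper w).unique (D.hpr w) ⟨hu, h⟩

theorem pr_of_mem_WJ {u : W} (hu : u ∈ D.WJ) : D.pr u = u :=
  D.pr_eq_of_mem hu (by simp)

theorem pr_mul_of_mem_Lam {l : W} (hl : l ∈ D.Lam) (w : W) : D.pr (l * w) = D.pr w :=
  D.pr_eq_of_mem (D.pr_mem w) (by simpa [mul_assoc] using mul_mem hl (D.hpr w).2)

def transl (w : W) : D.Lam := ⟨w * (D.pr w)⁻¹, (D.hpr w).2⟩

theorem transl_mul_pr (w : W) : (D.transl w : W) * D.pr w = w := by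
  simp [transl]

theorem transl_mul_of_mem_Lam (l : D.Lam) (w : W) : D.transl (l * w) = l * D.transl w :=
  Subtype.ext (by simp [transl, D.pr_mul_of_mem_Lam l.2, mul_assoc])

theorem transl_of_mem_WJ {u : W} (hu : u ∈ D.WJ) : D.transl u = 1 :=
  Subtype.ext (by simp [transl, D.pr_of_mem_WJ hu])

theorem iota_mul (l l' : D.Lam) : D.iota (l * l') = D.iota l + D.iota l' := by
  ext i
  simp [iota]

theorem iota_one : D.iota 1 = 0 := by
  ext i
  simp [iota]

theorem iota_inv (l : D.Lam) : D.iota l⁻¹ = -D.iota l :=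
  eq_neg_of_add_eq_zero_left (by rw [← iota_mul, inv_mul_cancel, iota_one])

theorem eq_one_of_iota_eq_zero {l : D.Lam} (h : D.iota l = 0) : l = 1 := by
  refine D.freeIso.injective (map_one D.freeIso ▸ ?_)
  ext i
  simpa [iota] using congr_fun h i

/-- Conjugation by `g` on `inl Λ ≅ Λ`. -/
def conjLam (g : Holomorph W) (μ : D.Lam) : D.Lam :=
  ⟨g.left * g.right μ * g.left⁻¹, D.hLam_normal.conj_mem _ (D.map_mem_Lam _ μ.2) _⟩

theorem coe_conjLam (g : Holomorph W) (μ : D.Lam) :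
    (D.conjLam g μ : W) = g.left * g.right μ * g.left⁻¹ := rfl

theorem conjLam_mul (g g' : Holomorph W) (μ : D.Lam) :
    D.conjLam (g * g') μ = D.conjLam g (D.conjLam g' μ) :=
  Subtype.ext (by simp [coe_conjLam, mul_assoc])

theorem conjLam_one (μ : D.Lam) : D.conjLam 1 μ = μ :=
  Subtype.ext (by simp [coe_conjLam])

theorem conjLam_inv_of_forall_eq_self {g : Holomorph W} (hg : ∀ μ, D.conjLam g μ = μ)
    (μ : D.Lam) : D.conjLam g⁻¹ μ = μ := by
  rw [← hg (D.conjLam g⁻¹ μ), ← conjLam_mul, mul_inv_cancel, conjLam_one]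

theorem smul_coe_mul (g : Holomorph W) (μ : D.Lam) (y : W) :
    g • ((μ : W) * y) = D.conjLam g μ * g • y :=
  Holomorph.smul_mul g μ y

theorem pr_smul_inv_pr_smul (g : Holomorph W) {u : W} (hu : u ∈ D.WJ) :
    D.pr (g⁻¹ • D.pr (g • u)) = u := by
  have h : D.pr (g • u) = ((D.transl (g • u))⁻¹ : D.Lam) * g • u := by
    rw [InvMemClass.coe_inv, eq_inv_mul_iff_mul_eq, D.transl_mul_pr]
  rw [h, smul_coe_mul, inv_smul_smul, D.pr_mul_of_mem_Lam (Subtype.prop _), D.pr_of_mem_WJ hu]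

/-- Summing over `W_J` removes the dependence of translation parts on coset representatives,
which makes `tau` a cocycle. -/
def tau (g : Holomorph W) : Fin D.rank → ℚ :=
  ∑ u ∈ D.hWJ_fin.toFinset, D.iota (D.transl (g • u))

theorem tau_mul (g g' : Holomorph W) (L : (Fin D.rank → ℚ) →ₗ[ℚ] Fin D.rank → ℚ)
    (hL : ∀ μ, D.iota (D.conjLam g μ) = L (D.iota μ)) :
    D.tau (g * g') = L (D.tau g') + D.tau g := by
  have hsplit : ∀ u, D.iota (D.transl ((g * g') • u)) =
      L (D.iota (D.transl (g' • u))) + D.iota (D.transl (g • D.pr (g' • u))) := by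
    intro u
    rw [mul_smul, ← D.transl_mul_pr (g' • u), smul_coe_mul, D.transl_mul_of_mem_Lam, iota_mul,
      hL, D.transl_mul_pr]
  simp only [tau, hsplit, Finset.sum_add_distrib, map_sum]
  congr 1
  -- `u ↦ pr (g' • u)` permutes `W_J`
  refine Finset.sum_nbij' (fun u => D.pr (g' • u)) (fun u => D.pr (g'⁻¹ • u)) ?_ ?_ ?_ ?_ ?_
  · exact fun u _ => D.hWJ_fin.mem_toFinset.mpr (D.pr_mem _)
  · exact fun u _ => D.hWJ_fin.mem_toFinset.mpr (D.pr_mem _)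
  · exact fun u hu => D.pr_smul_inv_pr_smul g' (D.hWJ_fin.mem_toFinset.mp hu)
  · exact fun u hu => by simpa using D.pr_smul_inv_pr_smul g'⁻¹ (D.hWJ_fin.mem_toFinset.mp hu)
  · exact fun u _ => rfl

theorem tau_mul_of_conjLam_eq_self {g : Holomorph W} (hg : ∀ μ, D.conjLam g μ = μ)
    (g' : Holomorph W) : D.tau (g * g') = D.tau g' + D.tau g :=
  D.tau_mul g g' LinearMap.id (by simp [hg])

theorem tau_mul_of_conjLam_eq_inv {g : Holomorph W} (hg : ∀ μ, D.conjLam g μ = μ⁻¹)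
    (g' : Holomorph W) : D.tau (g * g') = -D.tau g' + D.tau g :=
  D.tau_mul g g' (-LinearMap.id) (by simp [hg, iota_inv])

theorem tau_eq_zero_of_smul_mem {g : Holomorph W} (hg : ∀ u ∈ D.WJ, g • u ∈ D.WJ) :
    D.tau g = 0 :=
  Finset.sum_eq_zero fun u hu => by
    rw [D.transl_of_mem_WJ (hg u (D.hWJ_fin.mem_toFinset.mp hu)), iota_one]

theorem tau_one : D.tau 1 = 0 :=
  D.tau_eq_zero_of_smul_mem fun u hu => by rwa [one_smul]

theorem tau_inl (l : D.Lam) :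
    D.tau (SemidirectProduct.inl (l : W)) = (D.hWJ_fin.toFinset.card : ℚ) • D.iota l := by
  rw [tau, Nat.cast_smul_eq_nsmul, ← Finset.sum_const]
  refine Finset.sum_congr rfl fun u hu => ?_
  rw [Holomorph.smul_def, SemidirectProduct.left_inl, SemidirectProduct.right_inl,
    MulAut.one_apply, D.transl_mul_of_mem_Lam, D.transl_of_mem_WJ (D.hWJ_fin.mem_toFinset.mp hu),
    mul_one]

theorem eq_one_of_tau_inl_eq_zero {l : D.Lam} (h : D.tau (SemidirectProduct.inl (l : W)) = 0) :
    l = 1 := by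
  have hcard : (D.hWJ_fin.toFinset.card : ℚ) ≠ 0 :=
    Nat.cast_ne_zero.mpr (Finset.card_ne_zero_of_mem (D.hWJ_fin.mem_toFinset.mpr (one_mem _)))
  rw [D.tau_inl, smul_eq_zero] at h
  exact D.eq_one_of_iota_eq_zero (h.resolve_left hcard)

theorem mem_Lam_of_conjLam_inl_eq_self {x : W}
    (hx : ∀ μ, D.conjLam (SemidirectProduct.inl x) μ = μ) : x ∈ D.Lam :=
  D.mem_Lam_of_commute fun l hl => by
    have := congr_arg Subtype.val (hx ⟨l, hl⟩)
    rw [coe_conjLam] at this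
    exact mul_inv_eq_iff_eq_mul.mp this

theorem tau_commutator_inl_eq_zero {g : Holomorph W} (hconj : ∀ μ, D.conjLam g μ = μ)
    (hτ : D.tau g = 0) (y : W) :
    D.tau (g * SemidirectProduct.inl y * g⁻¹ * (SemidirectProduct.inl y)⁻¹) = 0 := by
  have hconj_inv := D.conjLam_inv_of_forall_eq_self hconj
  have hτ_inv : D.tau g⁻¹ = 0 := by
    simpa [hτ, tau_one] using (D.tau_mul_of_conjLam_eq_self hconj g⁻¹).symm
  have hL : ∀ μ, D.iota (D.conjLam (SemidirectProduct.inl y) μ) = D.rho y (D.iota μ) :=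
    fun μ => (D.hrho y μ).symm
  rw [mul_assoc, mul_assoc, D.tau_mul_of_conjLam_eq_self hconj, D.tau_mul _ _ _ hL,
    D.tau_mul_of_conjLam_eq_self hconj_inv, hτ, hτ_inv, add_zero, add_zero, ← map_inv,
    ← D.tau_mul _ _ _ hL, ← map_mul, mul_inv_cancel, map_one, tau_one]

/-- The commutator of `g` with `inl y` is a translation centralizing `Λ` with vanishing `τ`,
hence trivial. -/
theorem right_eq_conj_of_tau_eq_zero {g : Holomorph W} (hconj : ∀ μ, D.conjLam g μ = μ)
    (hτ : D.tau g = 0) : g.right = MulAut.conj g.left⁻¹ := by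
  ext y
  set n := g * SemidirectProduct.inl y * g⁻¹ * (SemidirectProduct.inl y)⁻¹ with hn_def
  have hn : n = SemidirectProduct.inl n.left := by
    conv_lhs => rw [← SemidirectProduct.inl_left_mul_inr_right n]
    simp [n, SemidirectProduct.mul_right]
  have hn_mem : n.left ∈ D.Lam := D.mem_Lam_of_conjLam_inl_eq_self fun μ => by
    rw [← hn, hn_def, conjLam_mul, conjLam_mul, conjLam_mul, hconj,
      D.conjLam_inv_of_forall_eq_self hconj, ← conjLam_mul, mul_inv_cancel, conjLam_one]
  have hn_one : n.left = 1 := congr_arg Subtype.val <|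
    D.eq_one_of_tau_inl_eq_zero (l := ⟨_, hn_mem⟩) (hn ▸ D.tau_commutator_inl_eq_zero hconj hτ y)
  have := congr_arg SemidirectProduct.left (mul_inv_eq_one.mp (hn.trans (by rw [hn_one, map_one])))
  simp only [SemidirectProduct.mul_left, MonoidHom.id_apply, SemidirectProduct.left_inl,
    SemidirectProduct.mul_right, SemidirectProduct.right_inl, mul_one, SemidirectProduct.inv_left,
    MulAut.inv_apply, map_inv, MulEquiv.apply_symm_apply] at this
  rw [MulAut.conj_apply]
  conv_rhs => rw [← this]
  group

end AffineData

/-- Conjugation by `*` inverts every element of `A_Λ`: for all `a ∈ A_Λ`,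
one has `* ∘ a ∘ * = a⁻¹` in `Aut(W,S)`. -/
theorem star_conj_inverts_ALam (cs : CoxeterSystem M W) (D : AffineData cs) :
    ∀ a : MulAut W, D.InALam a → D.st * a * D.st = a⁻¹ := by
  rintro a ⟨ha, w, -, haΛ⟩
  let k : Holomorph W := ⟨D.wJ⁻¹, D.st⟩
  let h : Holomorph W := ⟨w⁻¹, a⟩
  have hk : ∀ μ, D.conjLam k μ = μ⁻¹ := fun μ => Subtype.ext <| by
    simp only [k, AffineData.coe_conjLam, D.hst_Lam μ μ.2, InvMemClass.coe_inv]
    group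
  have hh : ∀ μ, D.conjLam h μ = μ := fun μ => Subtype.ext <| by
    simp only [h, AffineData.coe_conjLam, haΛ μ μ.2]
    group
  have hkτ : D.tau k = 0 := D.tau_eq_zero_of_smul_mem fun u hu => by
    simpa [k, Holomorph.smul_def, D.hst_J u hu, mul_assoc] using mul_mem hu D.hwJ_mem
  have hm : ∀ μ, D.conjLam (k * h * k * h) μ = μ := by simp [AffineData.conjLam_mul, hk, hh]
  have hmτ : D.tau (k * h * k * h) = 0 := by
    rw [mul_assoc, mul_assoc, D.tau_mul_of_conjLam_eq_inv hk, D.tau_mul_of_conjLam_eq_self hh,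
      D.tau_mul_of_conjLam_eq_inv hk, hkτ]
    abel
  have hinner : D.st * a * D.st * a = MulAut.conj (k * h * k * h).left⁻¹ :=
    D.right_eq_conj_of_tau_eq_zero hm hmτ
  have hone : (k * h * k * h).left⁻¹ = 1 :=
    D.eq_one_of_isDiagAut_conj (hinner ▸ ((D.isDiagAut_st.mul ha).mul D.isDiagAut_st).mul ha)
  rw [hone, map_one] at hinner
  exact eq_inv_of_mul_eq_one_left hinner

end LY
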